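/- arXiv:1602.04514 — 3 statements merged into one kernel-verified Lean document; each statement's English description precedes it below -/
import Mathlib

section
/- For every real x > 0, one has 2x/3 > Ω(1/x, 1/(2x)). -/
open scoped BigOperators Classical ComplexOrder

noncomputable section

namespace Paper

/-- `Ω(x,y) = Σ_{n ∈ ℤ} max(0, 1 − |n·x − y|)²`. -/
def Omega (x y : ℝ) : ℝ := ∑' n : ℤ, max 0 (1 - |(n : ℝ) * x - y|) ^ 2

/-- The extension of a finite sequence of length `ℓ` by zero to all of `ℤ`. -/
def ext (ℓ : ℕ) (f : ℕ → ℂ) (j : ℤ) : ℂ :=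
  if 0 ≤ j ∧ j < (ℓ : ℤ) then f j.toNat else 0

/-- Aperiodic crosscorrelation `C_{f,g}(s)` of two sequences of length `ℓ` at shift `s`. -/
def XC (ℓ : ℕ) (f g : ℕ → ℂ) (s : ℤ) : ℂ :=
  ∑' j : ℤ, ext ℓ f j * (starRingEnd ℂ) (ext ℓ g (j + s))

/-- Crosscorrelation demerit factor `CDF(f,g)`. -/
def CDF (ℓ : ℕ) (f g : ℕ → ℂ) : ℝ :=
  (∑' s : ℤ, ‖XC ℓ f g s‖ ^ 2) /
    (‖XC ℓ f f 0‖ * ‖XC ℓ g g 0‖)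

/-- Autocorrelation demerit factor `DF(f) = CDF(f,f) − 1`. -/
def DF (ℓ : ℕ) (f : ℕ → ℂ) : ℝ := CDF ℓ f f - 1

/-- `u` is a unimodularization of the length-`ℓ` sequence `f`: it agrees with `f` at
nonzero terms and replaces each zero term by a complex number of modulus `1`. -/
def IsUnimodularization (ℓ : ℕ) (f u : ℕ → ℂ) : Prop :=
  ∀ j < ℓ, (f j ≠ 0 → u j = f j) ∧ (f j = 0 → ‖u j‖ = 1)

/-- The multiplicative characters of `F_p = ZMod p`, extended by `χ(0) = 0`. -/
abbrev MChar (p : ℕ) := MulChar (ZMod p) ℂ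

instance (p : ℕ) [Fact p.Prime] : Fintype (MChar p) := Fintype.ofFinite _

/-- The Gauss sum `τ(χ) = Σ_{x ∈ F_p} e^{2πi x / p} χ(x)` (note `χ(0) = 0`). -/
def gauss (p : ℕ) [Fact p.Prime] (χ : MChar p) : ℂ :=
  ∑ x : ZMod p, Complex.exp (2 * Real.pi * Complex.I * (x.val : ℂ) / (p : ℂ)) * χ x

/-- The quadratic character `η` of `F_p`, with values in `ℂ`. -/
def quadChar (p : ℕ) [Fact p.Prime] : MChar p :=
  (quadraticChar (ZMod p)).ringHomComp (Int.castRingHom ℂ)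

/-- `c` is a character combination: the coefficient of the trivial character vanishes and
the sum of the squared magnitudes of the coefficients is `1`. -/
def IsCharCombo (p : ℕ) [Fact p.Prime] (c : MChar p → ℂ) : Prop :=
  c 1 = 0 ∧ ∑ χ : MChar p, ‖c χ‖ ^ 2 = 1

/-- The function `F(a) = Σ_χ f_χ · χ(a)` attached to a character combination. -/
def combFun (p : ℕ) [Fact p.Prime] (c : MChar p → ℂ) (a : ZMod p) : ℂ :=
  ∑ χ : MChar p, c χ * χ a

/-- The character combination sequence with shift `s`: its `j`-th term is `F(s + j)`. -/
def combSeq (p : ℕ) [Fact p.Prime] (c : MChar p → ℂ) (s : ℤ) : ℕ → ℂ :=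
  fun j => combFun p c (((s + (j : ℤ)) : ℤ) : ZMod p)

/-- A character combination is unimodularizable when `|F(a)| = 1` for all `a ≠ 0`. -/
def Unimodularizable (p : ℕ) [Fact p.Prime] (c : MChar p → ℂ) : Prop :=
  ∀ a : ZMod p, a ≠ 0 → ‖combFun p c a‖ = 1

/-- The parameter `S_{f,g}` of a pair of character combination sequences. -/
def Sparam (p : ℕ) [Fact p.Prime] (c d : MChar p → ℂ) : ℂ :=
  (∑ φ : MChar p, ∑ χ : MChar p, ∑ ψ : MChar p, ∑ ω : MChar p,
      if φ * χ = ψ * ω ∧ φ ≠ χ⁻¹ ∧ φ ≠ ψ ∧ φ ≠ ω then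
        c φ * d χ * (starRingEnd ℂ) (c ψ * d ω) *
          (gauss p φ * gauss p χ * (starRingEnd ℂ) (gauss p ψ * gauss p ω)) / (p : ℂ) ^ 2
      else 0)
    - ((∑ φ : MChar p, ‖c φ * d φ‖ ^ 2 : ℝ) : ℂ)
    - ((∑ φ : MChar p, ‖c φ * d φ⁻¹‖ ^ 2 : ℝ) : ℂ)
    - ∑ φ : MChar p, c φ * (starRingEnd ℂ) (c φ⁻¹) * d φ⁻¹ * (starRingEnd ℂ) (d φ)
    + ((‖c (quadChar p) * d (quadChar p)‖ ^ 2 : ℝ) : ℂ)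

/-- The parameter `S_{f,f}` of a single character combination sequence. -/
def SparamAuto (p : ℕ) [Fact p.Prime] (c : MChar p → ℂ) : ℂ :=
  (∑ φ : MChar p, ∑ χ : MChar p, ∑ ψ : MChar p, ∑ ω : MChar p,
      if φ * χ = ψ * ω ∧ φ ≠ χ⁻¹ ∧ φ ≠ ψ ∧ φ ≠ ω then
        c φ * c χ * (starRingEnd ℂ) (c ψ * c ω) *
          (gauss p φ * gauss p χ * (starRingEnd ℂ) (gauss p ψ * gauss p ω)) / (p : ℂ) ^ 2
      else 0)
    - 2 * ((∑ φ : MChar p, ‖c φ * c φ⁻¹‖ ^ 2 : ℝ) : ℂ)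
    - ((∑ φ : MChar p, ‖c φ‖ ^ 4 : ℝ) : ℂ)
    + ((‖c (quadChar p)‖ ^ 4 : ℝ) : ℂ)

/-- The parameter `U_{f,g}`. -/
def Uparam (p : ℕ) [Fact p.Prime] (c d : MChar p → ℂ) : ℝ :=
  ‖∑ φ : MChar p, c φ * (starRingEnd ℂ) (d φ)‖ ^ 2

/-- The parameter `V_{f,g}`. -/
def Vparam (p : ℕ) [Fact p.Prime] (c d : MChar p → ℂ) : ℝ :=
  ‖∑ φ : MChar p, c φ * d φ⁻¹ * φ (-1)‖ ^ 2

/-- The parameter `W_f`. -/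
def Wparam (p : ℕ) [Fact p.Prime] (c : MChar p → ℂ) : ℝ :=
  ∑ φ : MChar p, ‖c φ‖

/-- Periodic crosscorrelation of two periodic sequences of period `n` at shift `s`. -/
def PC (n : ℕ) [NeZero n] (u v : ZMod n → ℂ) (s : ZMod n) : ℂ :=
  ∑ j : ZMod n, u j * (starRingEnd ℂ) (v (j + s))

/-- Fourier transform `û_a = Σ_x u_x e^{2πi a x / n}` of a periodic sequence of period `n`. -/
def FT (n : ℕ) [NeZero n] (u : ZMod n → ℂ) (a : ZMod n) : ℂ :=
  ∑ x : ZMod n, u x * Complex.exp (2 * Real.pi * Complex.I * ((a.val : ℂ) * (x.val : ℂ)) / (n : ℂ))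

/-- `α` is a primitive element of `F_p`, i.e. a generator of the unit group. -/
def IsPrimitive (p : ℕ) (α : (ZMod p)ˣ) : Prop :=
  ∀ x : (ZMod p)ˣ, x ∈ Subgroup.zpowers α

/-- The subgroup `F_p^{*2m}` of `2m`-th powers in the unit group of `F_p`. -/
def powSubgroup (p m : ℕ) : Subgroup (ZMod p)ˣ :=
  (powMonoidHom (2 * m) : (ZMod p)ˣ →* (ZMod p)ˣ).range

/-- The quotient group `F_p^* / F_p^{*2m}` of `2m`-th power residue classes. -/
abbrev ResCosets (p m : ℕ) := (ZMod p)ˣ ⧸ powSubgroup p m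

/-- The function `F_{p,𝒜}`: `0` at `0`, `+1` on the union of the cosets in `𝒜`,
`−1` on the remaining nonzero elements. -/
def resFun (p m : ℕ) (A : Finset (ResCosets p m)) (j : ZMod p) : ℂ :=
  if h : IsUnit j then (if (QuotientGroup.mk h.unit : ResCosets p m) ∈ A then 1 else -1) else 0

/-- The sequence of a `2m`-th residue class construction, with shift `s`. -/
def resSeq (p m : ℕ) (A : Finset (ResCosets p m)) (s : ℤ) : ℕ → ℂ :=
  fun j => resFun p m A (((s + (j : ℤ)) : ℤ) : ZMod p)

/-- The character combination coefficients of a `2m`-th residue class sequence: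
`f_χ = (1/m) Σ_{A ∈ 𝒜} χ̄(A)` for nontrivial `χ` in the subgroup `Θ_p` of order `2m`
(characterized by `χ^{2m} = 1`), and `f_χ = 0` otherwise; `χ̄(A)` is evaluated at a
representative of the coset `A`, on which `χ̄` is constant. -/
def resCoef (p m : ℕ) [Fact p.Prime] (A : Finset (ResCosets p m)) (χ : MChar p) : ℂ :=
  if χ ≠ 1 ∧ χ ^ (2 * m) = 1 then
    (1 / (m : ℂ)) * ∑ B ∈ A, χ⁻¹ ((B.out : (ZMod p)ˣ) : ZMod p)
  else 0

/-- The image of the coset `B` under multiplication by `−1`. -/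
def negCoset (p m : ℕ) (B : ResCosets p m) : ResCosets p m :=
  QuotientGroup.mk ((-1 : (ZMod p)ˣ) * B.out)

/-- The quadratic residue function `H̃_p`: `+1` on `F_p^{*2}`, `−1` on `α F_p^{*2}`,
and `0` at `0`. -/
def Htilde (p : ℕ) (α : (ZMod p)ˣ) (x : ZMod p) : ℂ :=
  if ∃ y : (ZMod p)ˣ, x = ((y ^ 2 : (ZMod p)ˣ) : ZMod p) then 1
  else if ∃ y : (ZMod p)ˣ, x = ((α * y ^ 2 : (ZMod p)ˣ) : ZMod p) then -1
  else 0

/-- The quartic residue function `F̃_p`: `+1` on `F_p^{*4} ∪ αF_p^{*4}`,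
`−1` on `α²F_p^{*4} ∪ α³F_p^{*4}`, and `0` at `0`. -/
def Ftilde (p : ℕ) (α : (ZMod p)ˣ) (x : ZMod p) : ℂ :=
  if (∃ y : (ZMod p)ˣ, x = ((y ^ 4 : (ZMod p)ˣ) : ZMod p)) ∨
      (∃ y : (ZMod p)ˣ, x = ((α * y ^ 4 : (ZMod p)ˣ) : ZMod p)) then 1
  else if (∃ y : (ZMod p)ˣ, x = ((α ^ 2 * y ^ 4 : (ZMod p)ˣ) : ZMod p)) ∨
      (∃ y : (ZMod p)ˣ, x = ((α ^ 3 * y ^ 4 : (ZMod p)ˣ) : ZMod p)) then -1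
  else 0

/-- The quartic residue function `G̃_p`: `+1` on `F_p^{*4} ∪ α³F_p^{*4}`,
`−1` on `αF_p^{*4} ∪ α²F_p^{*4}`, and `0` at `0`. -/
def Gtilde (p : ℕ) (α : (ZMod p)ˣ) (x : ZMod p) : ℂ :=
  if (∃ y : (ZMod p)ˣ, x = ((y ^ 4 : (ZMod p)ˣ) : ZMod p)) ∨
      (∃ y : (ZMod p)ˣ, x = ((α ^ 3 * y ^ 4 : (ZMod p)ˣ) : ZMod p)) then 1
  else if (∃ y : (ZMod p)ˣ, x = ((α * y ^ 4 : (ZMod p)ˣ) : ZMod p)) ∨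
      (∃ y : (ZMod p)ˣ, x = ((α ^ 2 * y ^ 4 : (ZMod p)ˣ) : ZMod p)) then -1
  else 0

/-- The quadratic residue sequence `h̃_p^{s,ℓ}` (as a function; the length is used
in the correlation functionals). -/
def hSeq (p : ℕ) (α : (ZMod p)ˣ) (s : ℤ) : ℕ → ℂ :=
  fun j => Htilde p α (((s + (j : ℤ)) : ℤ) : ZMod p)

/-- The quartic residue sequence `f̃_p^{s,ℓ}`. -/
def fSeq (p : ℕ) (α : (ZMod p)ˣ) (s : ℤ) : ℕ → ℂ :=
  fun j => Ftilde p α (((s + (j : ℤ)) : ℤ) : ZMod p)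

/-- The quartic residue sequence `g̃_p^{s,ℓ}`. -/
def gSeq (p : ℕ) (α : (ZMod p)ˣ) (s : ℤ) : ℕ → ℂ :=
  fun j => Gtilde p α (((s + (j : ℤ)) : ℤ) : ZMod p)

/-! With `t = 1/(2x)` the summands of `Ω(1/x, 1/(2x))` are `(1 - |2n - 1| t)₊²`, so
`Ω = 2 Σ_{i ≥ 0} (1 - (2i + 1) t)₊²`. Since `v ↦ v₊²` is convex, the midpoint rule underestimates
its integral: `2t · a₊² ≤ ∫_{a-t}^{a+t} v₊² dv = ((a + t)₊³ - (a - t)₊³) / 3`, strictly when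
`a + t > 0`. Summing over `a = 1 - (2i + 1) t` telescopes to `6t Σ_{i ≥ 0} (1 - (2i + 1) t)₊² < 1`,
which is `Ω < 2x/3`. -/

lemma six_mul_max_sq_le (a : ℝ) {t : ℝ} (ht : 0 ≤ t) :
    6 * t * max 0 a ^ 2 ≤ max 0 (a + t) ^ 3 - max 0 (a - t) ^ 3 := by
  rcases le_or_gt a 0 with ha | ha
  · have : max 0 (a - t) ≤ max 0 (a + t) := max_le_max le_rfl (by linarith)
    rw [max_eq_left ha]
    nlinarith [pow_le_pow_left₀ (le_max_left 0 (a - t)) this 3]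
  rcases le_or_gt (a - t) 0 with hat | hat
  · rw [max_eq_right ha.le, max_eq_right (by linarith), max_eq_left hat]
    nlinarith [mul_nonneg (mul_nonneg ha.le ht) (sub_nonneg.mpr (by linarith : a ≤ t)),
      pow_pos ha 3]
  · rw [max_eq_right ha.le, max_eq_right (by linarith), max_eq_right hat.le]
    nlinarith [pow_nonneg ht 3]

lemma six_mul_max_sq_lt {a t : ℝ} (ht : 0 < t) (hat : 0 < a + t) :
    6 * t * max 0 a ^ 2 < max 0 (a + t) ^ 3 - max 0 (a - t) ^ 3 := by
  rw [max_eq_right hat.le]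
  rcases le_or_gt a 0 with ha | ha
  · rw [max_eq_left ha, max_eq_left (by linarith)]
    simpa using pow_pos hat 3
  rcases le_or_gt (a - t) 0 with ha' | ha'
  · rw [max_eq_right ha.le, max_eq_left ha']
    nlinarith [mul_nonneg (mul_nonneg ha.le ht.le) (sub_nonneg.mpr (by linarith : a ≤ t)),
      pow_pos ha 3, pow_pos ht 3]
  · rw [max_eq_right ha.le, max_eq_right ha'.le]
    nlinarith [pow_pos ht 3]

def oddSq (t : ℝ) (i : ℕ) : ℝ := max 0 (1 - (2 * i + 1) * t) ^ 2

def evenCube (t : ℝ) (i : ℕ) : ℝ := max 0 (1 - 2 * i * t) ^ 3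

section Telescoping

variable {t : ℝ}

lemma oddSq_nonneg (i : ℕ) : 0 ≤ oddSq t i := sq_nonneg _

lemma evenCube_nonneg (i : ℕ) : 0 ≤ evenCube t i := pow_nonneg (le_max_left 0 _) 3

lemma six_mul_oddSq_le (ht : 0 ≤ t) (i : ℕ) :
    6 * t * oddSq t i ≤ evenCube t i - evenCube t (i + 1) := by
  have h := six_mul_max_sq_le (1 - (2 * i + 1) * t) ht
  simp only [oddSq, evenCube]
  convert h using 4 <;> push_cast <;> ring

lemma six_mul_oddSq_zero_lt (ht : 0 < t) : 6 * t * oddSq t 0 < 1 - evenCube t 1 := by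
  have h := six_mul_max_sq_lt (a := 1 - t) ht (by simp)
  simp only [oddSq, evenCube]
  convert h using 3 <;> norm_num
  ring_nf

lemma six_mul_sum_oddSq_le (ht : 0 ≤ t) (m N : ℕ) :
    6 * t * ∑ i ∈ Finset.range N, oddSq t (m + i) ≤ evenCube t m :=
  calc 6 * t * ∑ i ∈ Finset.range N, oddSq t (m + i)
      ≤ ∑ i ∈ Finset.range N, (evenCube t (m + i) - evenCube t (m + (i + 1))) := by
        rw [Finset.mul_sum]
        exact Finset.sum_le_sum fun i _ => six_mul_oddSq_le ht (m + i)
    _ = evenCube t m - evenCube t (m + N) := Finset.sum_range_sub' (fun i => evenCube t (m + i)) N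
    _ ≤ evenCube t m := sub_le_self _ (evenCube_nonneg _)

lemma summable_oddSq (ht : 0 < t) : Summable (oddSq t) :=
  summable_of_sum_range_le (c := evenCube t 0 / (6 * t)) oddSq_nonneg fun N => by
    rw [le_div_iff₀' (by positivity)]
    simpa using six_mul_sum_oddSq_le ht.le 0 N

lemma six_mul_tsum_oddSq_lt_one (ht : 0 < t) : 6 * t * ∑' i, oddSq t i < 1 := by
  have htail : 6 * t * ∑' i, oddSq t (i + 1) ≤ evenCube t 1 := by
    rw [← le_div_iff₀' (by positivity)]
    refine Real.tsum_le_of_sum_range_le (fun i => oddSq_nonneg _) fun N => ?_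
    rw [le_div_iff₀' (by positivity)]
    simpa only [add_comm 1] using six_mul_sum_oddSq_le ht.le 1 N
  rw [(summable_oddSq ht).tsum_eq_zero_add, mul_add]
  linarith [six_mul_oddSq_zero_lt ht]

end Telescoping

lemma omega_inv_eq_two_mul_tsum_oddSq {x : ℝ} (hx : 0 < x) :
    Omega (1 / x) (1 / (2 * x)) = 2 * ∑' i, oddSq (1 / (2 * x)) i := by
  set t := 1 / (2 * x)
  have ht : 0 < t := by positivity
  have hshift : ∀ n : ℤ, max 0 (1 - |((n + 1 : ℤ) : ℝ) * (1 / x) - t|) ^ 2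
      = max 0 (1 - |(2 * n + 1) * t|) ^ 2 := fun n => by
    congr 4
    simp only [t]
    field_simp
    push_cast
    ring
  have hnat : ∀ i : ℕ, max 0 (1 - |(2 * ((i : ℤ) : ℝ) + 1) * t|) ^ 2 = oddSq t i := fun i => by
    rw [abs_of_pos (by positivity)]
    rfl
  have hneg : ∀ i : ℕ, max 0 (1 - |(2 * ((-(i + 1) : ℤ) : ℝ) + 1) * t|) ^ 2 = oddSq t i :=
    fun i => by
      rw [← hnat, ← abs_neg]
      push_cast
      ring_nf
  have hsum := (summable_oddSq ht).hasSum
  unfold Omega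
  rw [← (Equiv.addRight (1 : ℤ)).tsum_eq]
  simp only [Equiv.coe_addRight, hshift]
  rw [two_mul]
  exact (HasSum.of_nat_of_neg_add_one (by simpa only [hnat] using hsum)
    (by simpa only [hneg] using hsum)).tsum_eq

/-- For all `x > 0`, we have `2x/3 > Ω(1/x, 1/(2x))`. -/
theorem two_thirds_gt_omega (x : ℝ) (hx : 0 < x) :
    2 * x / 3 > Omega (1 / x) (1 / (2 * x)) := by
  have h := six_mul_tsum_oddSq_lt_one (t := 1 / (2 * x)) (by positivity)
  have h6 : 6 * (1 / (2 * x)) = 3 / x := by field_simp; ring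
  rw [h6, div_mul_eq_mul_div, div_lt_one hx] at h
  rw [omega_inv_eq_two_mul_tsum_oddSq hx]
  linarith

end Paper
end
end

section
/- The function x ↦ −2x/3 + Ω(1/x, 0), defined for real x > 0, tends to 0 as x → +∞. -/
/-!
If `N ≤ x < N + 1`, only the terms with `|n| ≤ N` survive in `Ω(1/x, 0)`, and summing the
squares `(1 - |n|/x)²` in closed form gives, with `d = x - N ∈ [0, 1)`,
`Ω(1/x, 0) = 2x/3 + 1/(3x) + d(1 - d)(2d - 1)/(3x²)`.
The error term is therefore at most `1/x`.
-/

open scoped BigOperators Classical ComplexOrder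

noncomputable section

namespace Paper

lemma sq_max_zero_one_sub_abs_intCast_div (n : ℤ) {x : ℝ} (hx : 0 < x) :
    max 0 (1 - |(n : ℝ) * (1 / x) - 0|) ^ 2 =
      if |(n : ℝ)| ≤ x then (1 - |(n : ℝ)| / x) ^ 2 else 0 := by
  rw [sub_zero, abs_mul, abs_of_pos (one_div_pos.mpr hx), mul_one_div]
  split_ifs with h
  · rw [max_eq_right (sub_nonneg.mpr (div_le_one_of_le₀ h hx.le))]
  · rw [max_eq_left (sub_nonpos.mpr ((one_le_div₀ hx).mpr (not_le.mp h).le)), zero_pow two_ne_zero]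

lemma abs_intCast_le_iff_mem_Icc {x : ℝ} {N : ℕ} (hNx : (N : ℝ) ≤ x) (hxN : x < N + 1) (n : ℤ) :
    |(n : ℝ)| ≤ x ↔ n ∈ Finset.Icc (-(N : ℤ)) N := by
  have hfloor : ⌊x⌋ = N := Int.floor_eq_iff.mpr ⟨mod_cast hNx, mod_cast hxN⟩
  rw [Finset.mem_Icc, ← abs_le, ← hfloor, Int.le_floor, Int.cast_abs]

lemma omega_one_div_zero_eq_sum_Icc {x : ℝ} {N : ℕ} (hx : 0 < x) (hNx : (N : ℝ) ≤ x)
    (hxN : x < N + 1) :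
    Omega (1 / x) 0 = ∑ n ∈ Finset.Icc (-(N : ℤ)) N, (1 - |(n : ℝ)| / x) ^ 2 := by
  simp only [Omega, sq_max_zero_one_sub_abs_intCast_div _ hx, abs_intCast_le_iff_mem_Icc hNx hxN]
  rw [tsum_eq_sum (s := Finset.Icc (-(N : ℤ)) N) (fun n hn => if_neg hn)]
  exact Finset.sum_congr rfl fun n hn => if_pos hn

lemma sum_Icc_one_sub_abs_div_sq (N : ℕ) {x : ℝ} (hx : x ≠ 0) :
    ∑ n ∈ Finset.Icc (-(N : ℤ)) N, (1 - |(n : ℝ)| / x) ^ 2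
      = (2 * N + 1) - 2 * N * (N + 1) / x + N * (N + 1) * (2 * N + 1) / (3 * x ^ 2) := by
  induction N with
  | zero => simp
  | succ N ih =>
    have hIcc : Finset.Icc (-((N : ℤ) + 1)) ((N : ℤ) + 1)
        = insert (-((N : ℤ) + 1)) (insert ((N : ℤ) + 1) (Finset.Icc (-(N : ℤ)) N)) := by
      ext n; simp only [Finset.mem_insert, Finset.mem_Icc]; omega
    push_cast [hIcc]
    rw [Finset.sum_insert (by simp only [Finset.mem_insert, Finset.mem_Icc]; omega),
      Finset.sum_insert (by simp only [Finset.mem_Icc]; omega), ih]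
    have hN : |(N : ℝ) + 1| = N + 1 := abs_of_pos (by positivity)
    push_cast [abs_neg, hN]
    field_simp
    ring

lemma neg_two_thirds_add_omega_one_div_eq {x : ℝ} {N : ℕ} (hx : 0 < x) (hNx : (N : ℝ) ≤ x)
    (hxN : x < N + 1) :
    -(2 * x) / 3 + Omega (1 / x) 0
      = 1 / (3 * x) + (x - N) * (1 - (x - N)) * (2 * (x - N) - 1) / (3 * x ^ 2) := by
  rw [omega_one_div_zero_eq_sum_Icc hx hNx hxN, sum_Icc_one_sub_abs_div_sq N hx.ne']
  field_simp
  ring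

lemma abs_mul_one_sub_mul_two_mul_sub_one_le_one {d : ℝ} (h0 : 0 ≤ d) (h1 : d ≤ 1) :
    |d * (1 - d) * (2 * d - 1)| ≤ 1 := by
  rw [abs_mul, abs_mul, abs_of_nonneg h0, abs_of_nonneg (sub_nonneg.mpr h1)]
  have h2 : |2 * d - 1| ≤ 1 := abs_le.mpr ⟨by linarith, by linarith⟩
  calc d * (1 - d) * |2 * d - 1| ≤ 1 * 1 * 1 := by gcongr; linarith
    _ = 1 := by norm_num

lemma abs_neg_two_thirds_add_omega_one_div_le {x : ℝ} (hx : 1 ≤ x) :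
    |-(2 * x) / 3 + Omega (1 / x) 0| ≤ 1 / x := by
  have hx0 : 0 < x := by linarith
  set N := ⌊x⌋₊
  have hNx : (N : ℝ) ≤ x := Nat.floor_le hx0.le
  have hxN : x < N + 1 := Nat.lt_floor_add_one x
  have hcubic := abs_mul_one_sub_mul_two_mul_sub_one_le_one (d := x - N) (by linarith) (by linarith)
  rw [neg_two_thirds_add_omega_one_div_eq hx0 hNx hxN]
  calc _ ≤ |1 / (3 * x)| + |(x - N) * (1 - (x - N)) * (2 * (x - N) - 1) / (3 * x ^ 2)| :=
        abs_add_le _ _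
    _ ≤ 1 / (3 * x) + 1 / (3 * x ^ 2) := by
        rw [abs_of_pos (by positivity), abs_div, abs_of_pos (by positivity : (0 : ℝ) < 3 * x ^ 2)]
        gcongr
    _ ≤ 1 / x := by
        rw [div_add_div _ _ (by positivity) (by positivity), div_le_div_iff₀ (by positivity) hx0]
        nlinarith

/-- The function `x ↦ −2x/3 + Ω(1/x, 0)` tends to `0` as `x → +∞`. -/
theorem tendsto_neg_two_thirds_add_omega :
    Filter.Tendsto (fun x : ℝ => -(2 * x) / 3 + Omega (1 / x) 0) Filter.atTop (nhds 0) := by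
  refine squeeze_zero_norm' ?_ (by simpa only [one_div] using tendsto_inv_atTop_zero)
  filter_upwards [Filter.eventually_ge_atTop 1] with x hx
  rw [Real.norm_eq_abs, ← one_div]
  exact abs_neg_two_thirds_add_omega_one_div_le hx

end Paper
end
end

section
/- Let m be a positive integer, p a prime with p ≡ 1 (mod 2m), and 𝒜, ℬ subsets of F_p^*/F_p^{*2m} with |𝒜| = |ℬ| = m. Let f and g be 2m-th residue class sequences with prime p and classes 𝒜 and ℬ respectively. Then: (i) U_{f,g} = ((2/m)·|𝒜∩ℬ| − 1)²; (ii) V_{f,g} = ((2/m)·|𝒜∩ℬ| − 1)² if p ≡ 1 (mod 4m), and V_{f,g} = ((2/m)·|𝒜∩(−ℬ)| − 1)² if p ≢ 1 (mod 4m), where −ℬ = {(−1)·B : B ∈ ℬ}; (iii) 1 ≤ W_f ≤ √(2m−1) and 1 ≤ W_g ≤ √(2m−1); (iv) if p ≢ 1 (mod 4m) and α is a primitive element of F_p, then (−1)·B = α^m·B for every coset B ∈ F_p^*/F_p^{*2m}. In particular, U_{f,f} = 1, and V_{f,f} = 1 when p ≡ 1 (mod 4m). -/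
open scoped BigOperators Classical ComplexOrder

noncomputable section

namespace Paper

/-! The coefficients `f_χ` are, up to the factor `1/m`, the Fourier coefficients of the indicator
of `𝒜` on the cyclic group `F_p^*/F_p^{*2m}` of order `2m`, whose characters are exactly the `χ`
with `χ^{2m} = 1`. Plancherel's identity for this group turns `Σ f_χ conj(g_χ)` into
`(2m·|𝒜 ∩ ℬ| − m²)/m²`, the `−m²` being the excluded trivial character; `Σ f_χ g_{χ̄} χ(−1)` is
the same sum with `ℬ` replaced by `−ℬ`. Taking `ℬ = 𝒜` gives `Σ |f_χ|² = 1` over `2m − 1`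
characters, whence the bounds on `W` by Cauchy–Schwarz. Finally, if `p − 1 = 2mk` then
`−1 = α^{mk}`, which is a `2m`-th power iff `k` is even, i.e. iff `p ≡ 1 (mod 4m)`, and is
`α^m` times a `2m`-th power otherwise. -/

section Duality

variable {M : Type*} [CommMonoid M]

lemma mulChar_pow_eq_one_iff (χ : MulChar M ℂ) (n : ℕ) :
    χ ^ n = 1 ↔ ∀ u ∈ (powMonoidHom n : Mˣ →* Mˣ).range, χ u = 1 := by
  refine ⟨?_, fun h => MulChar.ext fun u => ?_⟩
  · rintro hχ _ ⟨u, rfl⟩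
    rw [powMonoidHom_apply, Units.val_pow_eq_pow_val, map_pow, ← MulChar.pow_apply_coe, hχ,
      MulChar.one_apply_coe]
  · rw [MulChar.pow_apply_coe, ← map_pow, ← Units.val_pow_eq_pow_val,
      (h _ ⟨u, rfl⟩ : χ ↑(u ^ n) = 1), MulChar.one_apply_coe]

lemma mulChar_apply_out_mk {H : Subgroup Mˣ} {χ : MulChar M ℂ} (hχ : ∀ h ∈ H, χ h = 1)
    (u : Mˣ) : χ ((QuotientGroup.mk u : Mˣ ⧸ H).out : M) = χ u := by
  obtain ⟨h, hu⟩ := QuotientGroup.mk_out_eq_mul H u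
  rw [hu, Units.val_mul, map_mul, hχ h h.2, mul_one]

def cosetSum {H : Subgroup Mˣ} (χ : MulChar M ℂ) (A : Finset (Mˣ ⧸ H)) : ℂ :=
  ∑ a ∈ A, χ (a.out : M)

lemma cosetSum_one {H : Subgroup Mˣ} (A : Finset (Mˣ ⧸ H)) :
    cosetSum (1 : MulChar M ℂ) A = A.card := by
  simp [cosetSum, MulChar.one_apply_coe]

variable [Fintype (MulChar M ℂ)]

/-- The characters of `Mˣ ⧸ H`, seen as characters of `M`. -/
def charsTrivialOn (H : Subgroup Mˣ) : Finset (MulChar M ℂ) :=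
  Finset.univ.filter fun χ => ∀ h ∈ H, χ h = 1

lemma mem_charsTrivialOn {H : Subgroup Mˣ} {χ : MulChar M ℂ} :
    χ ∈ charsTrivialOn H ↔ ∀ h ∈ H, χ h = 1 := by
  simp [charsTrivialOn]

variable [Finite M] (H : Subgroup Mˣ)

theorem sum_charsTrivialOn_apply (u : Mˣ) :
    ∑ χ ∈ charsTrivialOn H, χ u = if u ∈ H then (H.index : ℂ) else 0 := by
  set X := (MulChar.subgroupOrderIsoSubgroupMulChar M ℂ H).ofDual
  have hX : ∀ χ, χ ∈ X ↔ χ ∈ charsTrivialOn H := fun χ => by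
    rw [mem_charsTrivialOn, MulChar.mem_subgroupOrderIsoSubgroupMulChar_iff]
  split_ifs with hu
  · have hcard : Nat.card X = H.index := MulChar.card_subgroupOrderIsoSubgroupMulChar
    rw [Finset.sum_congr rfl fun χ hχ => mem_charsTrivialOn.mp hχ u hu, Finset.sum_const,
      nsmul_one, ← hcard, Nat.card_eq_fintype_card, Fintype.card_subtype]
    simp only [hX, Finset.filter_mem_eq_inter, Finset.univ_inter]
  · obtain ⟨ψ, hψH, hψu⟩ : ∃ ψ ∈ charsTrivialOn H, ψ u ≠ 1 := by
      by_contra! h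
      refine hu ?_
      simpa [X] using (MulChar.mem_subgroupOrderIsoSubgroupMulChar_symm_iff (X := X)).mpr
        fun χ hχ => h χ ((hX χ).mp hχ)
    rw [← hX] at hψH
    refine eq_zero_of_mul_eq_self_left hψu ?_
    rw [Finset.mul_sum]
    refine Finset.sum_nbij' (ψ * ·) (ψ⁻¹ * ·) (fun χ hχ => ?_) (fun χ hχ => ?_)
      (fun χ _ => inv_mul_cancel_left ψ χ) (fun χ _ => mul_inv_cancel_left ψ χ)
      (fun χ _ => (MulChar.mul_apply ψ χ u).symm)
    · simpa [← hX] using X.mul_mem hψH ((hX χ).mpr hχ)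
    · simpa [← hX] using X.mul_mem (X.inv_mem hψH) ((hX χ).mpr hχ)

theorem card_charsTrivialOn : (charsTrivialOn H).card = H.index := by
  have h1 := sum_charsTrivialOn_apply H 1
  simp only [Units.val_one, map_one, Finset.sum_const, nsmul_one, if_pos H.one_mem] at h1
  exact_mod_cast h1

theorem sum_cosetSum_inv_mul_cosetSum (A C : Finset (Mˣ ⧸ H)) :
    ∑ χ ∈ charsTrivialOn H, cosetSum χ⁻¹ A * cosetSum χ C = H.index * (A ∩ C).card := by
  have hterm : ∀ (χ : MulChar M ℂ) (a c : Mˣ ⧸ H),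
      χ⁻¹ (a.out : M) * χ (c.out : M) = χ ((a.out⁻¹ * c.out : Mˣ) : M) := by
    intro χ a c
    calc χ⁻¹ (a.out : M) * χ (c.out : M)
        = (χ⁻¹ * χ) (a.out : M) * χ ((a.out⁻¹ * c.out : Mˣ) : M) := by
          rw [MulChar.mul_apply, mul_assoc, ← map_mul, ← Units.val_mul, mul_inv_cancel_left]
      _ = χ ((a.out⁻¹ * c.out : Mˣ) : M) := by
          rw [MulChar.inv_mul, MulChar.one_apply_coe, one_mul]
  have hmem : ∀ a c : Mˣ ⧸ H, a.out⁻¹ * c.out ∈ H ↔ a = c := fun a c => by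
    rw [← QuotientGroup.eq, QuotientGroup.out_eq', QuotientGroup.out_eq']
  simp only [cosetSum, Finset.sum_mul_sum, hterm]
  rw [Finset.sum_comm]
  simp only [Finset.sum_comm (s := charsTrivialOn H), sum_charsTrivialOn_apply, hmem,
    Finset.sum_ite_eq, ← Finset.sum_filter, Finset.sum_const, Finset.filter_mem_eq_inter,
    nsmul_eq_mul, mul_comm]

end Duality

lemma one_le_sum_and_sum_le_sqrt_card {ι : Type*} (s : Finset ι) {x : ι → ℝ}
    (hx : ∀ i ∈ s, 0 ≤ x i) (hsq : ∑ i ∈ s, x i ^ 2 = 1) :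
    1 ≤ ∑ i ∈ s, x i ∧ ∑ i ∈ s, x i ≤ Real.sqrt s.card := by
  have hsum : 0 ≤ ∑ i ∈ s, x i := Finset.sum_nonneg hx
  have hlow : 1 ≤ (∑ i ∈ s, x i) ^ 2 := hsq ▸ Finset.sum_sq_le_sq_sum_of_nonneg hx
  have hup : (∑ i ∈ s, x i) ^ 2 ≤ s.card := by
    simpa [hsq] using sq_sum_le_card_mul_sum_sq (s := s) (f := x)
  exact ⟨by nlinarith, Real.le_sqrt_of_sq_le hup⟩

lemma mod_four_mul_eq_one_iff_even {p m k : ℕ} (hm : 0 < m) (hk : p = 2 * m * k + 1) :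
    p % (4 * m) = 1 ↔ Even k := by
  obtain ⟨t, rfl | rfl⟩ := Nat.even_or_odd' k
  · have : p = 4 * m * t + 1 := by rw [hk]; ring
    simp [this, Nat.mod_eq_of_lt (by omega : 1 < 4 * m)]
  · have : p = 4 * m * t + (2 * m + 1) := by rw [hk]; ring
    simp [this, Nat.mod_eq_of_lt (by omega : 2 * m + 1 < 4 * m), hm.ne']

section ResidueClasses

variable {p m : ℕ} [Fact p.Prime]

lemma index_powSubgroup (hdvd : 2 * m ∣ p - 1) : (powSubgroup p m).index = 2 * m := by
  rw [powSubgroup, IsCyclic.index_powMonoidHom_range, Nat.card_eq_fintype_card, ZMod.card_units,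
    Nat.gcd_eq_right hdvd]

lemma mem_charsTrivialOn_powSubgroup {χ : MChar p} :
    χ ∈ charsTrivialOn (powSubgroup p m) ↔ χ ^ (2 * m) = 1 := by
  rw [mem_charsTrivialOn, mulChar_pow_eq_one_iff]
  rfl

lemma resCoef_of_mem {A : Finset (ResCosets p m)} {χ : MChar p}
    (hχ : χ ∈ (charsTrivialOn (powSubgroup p m)).erase 1) :
    resCoef p m A χ = 1 / m * cosetSum χ⁻¹ A := by
  rw [Finset.mem_erase, mem_charsTrivialOn_powSubgroup] at hχ
  exact if_pos hχ

lemma resCoef_of_not_mem {A : Finset (ResCosets p m)} {χ : MChar p}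
    (hχ : χ ∉ (charsTrivialOn (powSubgroup p m)).erase 1) : resCoef p m A χ = 0 := by
  rw [Finset.mem_erase, mem_charsTrivialOn_powSubgroup] at hχ
  exact if_neg hχ

theorem sum_resCoef_mul_cosetSum (hm : 0 < m) (hdvd : 2 * m ∣ p - 1)
    {A C : Finset (ResCosets p m)} (hA : A.card = m) (hC : C.card = m) :
    ∑ χ ∈ (charsTrivialOn (powSubgroup p m)).erase 1, resCoef p m A χ * (1 / m * cosetSum χ C)
      = ((2 / m * (A ∩ C).card - 1 : ℝ) : ℂ) := by
  have hone : (1 : MChar p) ∈ charsTrivialOn (powSubgroup p m) :=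
    mem_charsTrivialOn.mpr fun h _ => MulChar.one_apply_coe h
  have hplancherel := sum_cosetSum_inv_mul_cosetSum (powSubgroup p m) A C
  rw [index_powSubgroup hdvd] at hplancherel
  have hm0 : (m : ℂ) ≠ 0 := Nat.cast_ne_zero.mpr hm.ne'
  calc ∑ χ ∈ (charsTrivialOn (powSubgroup p m)).erase 1, resCoef p m A χ * (1 / m * cosetSum χ C)
      = 1 / m ^ 2 * ∑ χ ∈ (charsTrivialOn (powSubgroup p m)).erase 1,
          cosetSum χ⁻¹ A * cosetSum χ C := by
        rw [Finset.mul_sum]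
        refine Finset.sum_congr rfl fun χ hχ => ?_
        rw [resCoef_of_mem hχ]
        ring
    _ = 1 / m ^ 2 * (2 * m * (A ∩ C).card - m * m) := by
        rw [Finset.sum_erase_eq_sub hone, hplancherel, inv_one, cosetSum_one, cosetSum_one, hA,
          hC]
        push_cast
        ring
    _ = ((2 / m * (A ∩ C).card - 1 : ℝ) : ℂ) := by
        push_cast
        field_simp

lemma star_resCoef {B : Finset (ResCosets p m)} {χ : MChar p}
    (hχ : χ ∈ (charsTrivialOn (powSubgroup p m)).erase 1) :
    (starRingEnd ℂ) (resCoef p m B χ) = 1 / m * cosetSum χ B := by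
  simp only [resCoef_of_mem hχ, cosetSum, map_mul, map_sum, ← RCLike.star_def,
    MulChar.star_apply', inv_inv]
  simp

lemma negCoset_eq_mk_neg_one_mul (b : ResCosets p m) :
    negCoset p m b = QuotientGroup.mk (-1) * b := by
  rw [negCoset, QuotientGroup.mk_mul, QuotientGroup.out_eq']

lemma negCoset_injective : Function.Injective (negCoset p m) := by
  intro a b h
  simpa [negCoset_eq_mk_neg_one_mul] using h

lemma resCoef_inv_mul_apply_neg_one {B : Finset (ResCosets p m)} {χ : MChar p}
    (hχ : χ ∈ (charsTrivialOn (powSubgroup p m)).erase 1) :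
    resCoef p m B χ⁻¹ * χ (-1) = 1 / m * cosetSum χ (B.image (negCoset p m)) := by
  have hχinv : χ⁻¹ ∈ (charsTrivialOn (powSubgroup p m)).erase 1 := by
    rw [Finset.mem_erase, mem_charsTrivialOn_powSubgroup] at hχ ⊢
    exact ⟨inv_ne_one.mpr hχ.1, by rw [inv_pow, hχ.2, inv_one]⟩
  have hneg : ∀ b : ResCosets p m,
      χ ((negCoset p m b).out : ZMod p) = χ (-1) * χ (b.out : ZMod p) := fun b => by
    rw [negCoset, mulChar_apply_out_mk (mem_charsTrivialOn.mp (Finset.mem_of_mem_erase hχ)),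
        Units.val_mul, map_mul, Units.val_neg, Units.val_one]
  rw [resCoef_of_mem hχinv, inv_inv, cosetSum, cosetSum,
    Finset.sum_image fun a _ b _ h => negCoset_injective h]
  simp only [hneg, ← Finset.mul_sum]
  ring

theorem sum_resCoef_mul_star (hm : 0 < m) (hdvd : 2 * m ∣ p - 1)
    {A B : Finset (ResCosets p m)} (hA : A.card = m) (hB : B.card = m) :
    ∑ χ : MChar p, resCoef p m A χ * (starRingEnd ℂ) (resCoef p m B χ)
      = ((2 / m * (A ∩ B).card - 1 : ℝ) : ℂ) := by
  rw [← Finset.sum_subset ((charsTrivialOn (powSubgroup p m)).erase 1).subset_univ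
    fun χ _ hχ => by rw [resCoef_of_not_mem hχ, zero_mul]]
  rw [Finset.sum_congr rfl fun χ hχ => by rw [star_resCoef hχ]]
  exact sum_resCoef_mul_cosetSum hm hdvd hA hB

theorem sum_resCoef_mul_resCoef_inv (hm : 0 < m) (hdvd : 2 * m ∣ p - 1)
    {A B : Finset (ResCosets p m)} (hA : A.card = m) (hB : B.card = m) :
    ∑ χ : MChar p, resCoef p m A χ * resCoef p m B χ⁻¹ * χ (-1)
      = ((2 / m * (A ∩ B.image (negCoset p m)).card - 1 : ℝ) : ℂ) := by
  rw [← Finset.sum_subset ((charsTrivialOn (powSubgroup p m)).erase 1).subset_univ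
    fun χ _ hχ => by rw [resCoef_of_not_mem hχ, zero_mul, zero_mul]]
  rw [Finset.sum_congr rfl fun χ hχ => by rw [mul_assoc, resCoef_inv_mul_apply_neg_one hχ]]
  exact sum_resCoef_mul_cosetSum hm hdvd hA
    (by rw [Finset.card_image_of_injective _ negCoset_injective, hB])

theorem Uparam_resCoef (hm : 0 < m) (hdvd : 2 * m ∣ p - 1)
    {A B : Finset (ResCosets p m)} (hA : A.card = m) (hB : B.card = m) :
    Uparam p (resCoef p m A) (resCoef p m B) = (2 / m * (A ∩ B).card - 1) ^ 2 := by
  rw [Uparam, sum_resCoef_mul_star hm hdvd hA hB, Complex.norm_real, Real.norm_eq_abs, sq_abs]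

theorem Vparam_resCoef (hm : 0 < m) (hdvd : 2 * m ∣ p - 1)
    {A B : Finset (ResCosets p m)} (hA : A.card = m) (hB : B.card = m) :
    Vparam p (resCoef p m A) (resCoef p m B)
      = (2 / m * (A ∩ B.image (negCoset p m)).card - 1) ^ 2 := by
  rw [Vparam, sum_resCoef_mul_resCoef_inv hm hdvd hA hB, Complex.norm_real, Real.norm_eq_abs,
    sq_abs]

theorem Uparam_resCoef_self (hm : 0 < m) (hdvd : 2 * m ∣ p - 1)
    {A : Finset (ResCosets p m)} (hA : A.card = m) :
    Uparam p (resCoef p m A) (resCoef p m A) = 1 := by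
  have hm0 : (m : ℝ) ≠ 0 := Nat.cast_ne_zero.mpr hm.ne'
  rw [Uparam_resCoef hm hdvd hA hA, Finset.inter_self, hA]
  field_simp
  ring

theorem sum_norm_resCoef_sq (hm : 0 < m) (hdvd : 2 * m ∣ p - 1)
    {A : Finset (ResCosets p m)} (hA : A.card = m) :
    ∑ χ ∈ (charsTrivialOn (powSubgroup p m)).erase 1, ‖resCoef p m A χ‖ ^ 2 = 1 := by
  have hm0 : (m : ℝ) ≠ 0 := Nat.cast_ne_zero.mpr hm.ne'
  have h := sum_resCoef_mul_star hm hdvd hA hA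
  rw [Finset.inter_self, hA, div_mul_cancel₀ _ hm0] at h
  rw [Finset.sum_subset ((charsTrivialOn (powSubgroup p m)).erase 1).subset_univ
    fun χ _ hχ => by rw [resCoef_of_not_mem hχ, norm_zero, zero_pow two_ne_zero]]
  simp only [Complex.mul_conj', ← Complex.ofReal_pow, ← Complex.ofReal_sum] at h
  rw [Complex.ofReal_injective h]
  norm_num

theorem Wparam_resCoef_bounds (hm : 0 < m) (hdvd : 2 * m ∣ p - 1)
    {A : Finset (ResCosets p m)} (hA : A.card = m) :
    1 ≤ Wparam p (resCoef p m A) ∧ Wparam p (resCoef p m A) ≤ Real.sqrt (2 * m - 1) := by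
  have hW : Wparam p (resCoef p m A)
      = ∑ χ ∈ (charsTrivialOn (powSubgroup p m)).erase 1, ‖resCoef p m A χ‖ :=
    (Finset.sum_subset ((charsTrivialOn (powSubgroup p m)).erase 1).subset_univ
      fun χ _ hχ => by rw [resCoef_of_not_mem hχ, norm_zero]).symm
  have hcard : (((charsTrivialOn (powSubgroup p m)).erase 1).card : ℝ) = 2 * m - 1 := by
    rw [Finset.card_erase_of_mem (mem_charsTrivialOn.mpr fun h _ => MulChar.one_apply_coe h),
      card_charsTrivialOn, index_powSubgroup hdvd, Nat.cast_sub (by omega)]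
    push_cast
    ring
  rw [hW, ← hcard]
  exact one_le_sum_and_sum_le_sqrt_card _ (fun _ _ => norm_nonneg _)
    (sum_norm_resCoef_sq hm hdvd hA)

lemma pow_eq_neg_one_of_isPrimitive {α : (ZMod p)ˣ} (hα : IsPrimitive p α) {j : ℕ}
    (hj : p = 2 * j + 1) : α ^ j = -1 := by
  have hord : orderOf α = j * 2 := by
    rw [orderOf_eq_card_of_forall_mem_zpowers hα, Nat.card_eq_fintype_card, ZMod.card_units]
    omega
  have hpos : 0 < orderOf α := by
    have := (Fact.out : p.Prime).two_le
    omega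
  have hroot : IsPrimitiveRoot ((α ^ j : (ZMod p)ˣ) : ZMod p) 2 :=
    IsPrimitiveRoot.coe_units_iff.mpr ((IsPrimitiveRoot.orderOf α).pow hpos hord)
  exact Units.ext (by rw [hroot.eq_neg_one_of_two_right, Units.val_neg, Units.val_one])

lemma mk_neg_one_eq_one {α : (ZMod p)ˣ} (hα : IsPrimitive p α) {k : ℕ}
    (hk : p = 2 * m * k + 1) (heven : Even k) :
    (QuotientGroup.mk (-1) : ResCosets p m) = 1 := by
  obtain ⟨t, rfl⟩ := heven
  refine (QuotientGroup.eq_one_iff _).mpr ⟨α ^ t, ?_⟩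
  rw [powMonoidHom_apply, ← pow_mul, ← pow_eq_neg_one_of_isPrimitive hα (j := m * (t + t))
    (by rw [hk]; ring)]
  ring_nf

lemma mk_neg_one_eq_mk_pow {α : (ZMod p)ˣ} (hα : IsPrimitive p α) {k : ℕ}
    (hk : p = 2 * m * k + 1) (hodd : Odd k) :
    (QuotientGroup.mk (-1) : ResCosets p m) = QuotientGroup.mk (α ^ m) := by
  obtain ⟨t, rfl⟩ := hodd
  have hsplit : (-1 : (ZMod p)ˣ) = α ^ m * (α ^ t) ^ (2 * m) := by
    rw [← pow_eq_neg_one_of_isPrimitive hα (j := m * (2 * t + 1)) (by rw [hk]; ring), ← pow_mul,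
      ← pow_add]
    ring_nf
  have hpow : (QuotientGroup.mk ((α ^ t) ^ (2 * m)) : ResCosets p m) = 1 :=
    (QuotientGroup.eq_one_iff _).mpr ⟨α ^ t, rfl⟩
  rw [hsplit, QuotientGroup.mk_mul, hpow, mul_one]

lemma negCoset_eq_id {α : (ZMod p)ˣ} (hα : IsPrimitive p α) {k : ℕ}
    (hk : p = 2 * m * k + 1) (heven : Even k) : negCoset p m = id :=
  funext fun b => by rw [negCoset_eq_mk_neg_one_mul, mk_neg_one_eq_one hα hk heven, one_mul, id]

end ResidueClasses

/-- Combinatorial formulae for the parameters `U_{f,g}`, `V_{f,g}`, `W_f`, `W_g` of a pair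
of `2m`-th residue class sequences with classes `𝒜` and `ℬ`. -/
theorem residue_class_parameters
    (m p : ℕ) (hm : 0 < m) [Fact p.Prime] (hp1 : p % (2 * m) = 1)
    (A B : Finset (ResCosets p m)) (hA : A.card = m) (hB : B.card = m)
    (α : (ZMod p)ˣ) (hα : IsPrimitive p α) :
    Uparam p (resCoef p m A) (resCoef p m B)
        = ((2 / (m : ℝ)) * ((A ∩ B).card : ℝ) - 1) ^ 2 ∧
    (p % (4 * m) = 1 →
      Vparam p (resCoef p m A) (resCoef p m B)
        = ((2 / (m : ℝ)) * ((A ∩ B).card : ℝ) - 1) ^ 2) ∧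
    (p % (4 * m) ≠ 1 →
      Vparam p (resCoef p m A) (resCoef p m B)
        = ((2 / (m : ℝ)) * ((A ∩ B.image (negCoset p m)).card : ℝ) - 1) ^ 2) ∧
    (1 ≤ Wparam p (resCoef p m A) ∧ Wparam p (resCoef p m A) ≤ Real.sqrt (2 * (m : ℝ) - 1)) ∧
    (1 ≤ Wparam p (resCoef p m B) ∧ Wparam p (resCoef p m B) ≤ Real.sqrt (2 * (m : ℝ) - 1)) ∧
    (p % (4 * m) ≠ 1 →
      ∀ b : (ZMod p)ˣ,
        (QuotientGroup.mk ((-1 : (ZMod p)ˣ) * b) : ResCosets p m)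
          = QuotientGroup.mk (α ^ m * b)) ∧
    Uparam p (resCoef p m A) (resCoef p m A) = 1 ∧
    (p % (4 * m) = 1 → Vparam p (resCoef p m A) (resCoef p m A) = 1) := by
  obtain ⟨k, hk⟩ : ∃ k, p = 2 * m * k + 1 :=
    ⟨p / (2 * m), by have := Nat.div_add_mod p (2 * m); omega⟩
  have hdvd : 2 * m ∣ p - 1 := ⟨k, by omega⟩
  have hmod := mod_four_mul_eq_one_iff_even hm hk
  refine ⟨Uparam_resCoef hm hdvd hA hB, fun h4 => ?_, fun _ => Vparam_resCoef hm hdvd hA hB,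
    Wparam_resCoef_bounds hm hdvd hA, Wparam_resCoef_bounds hm hdvd hB, fun h4 b => ?_,
    Uparam_resCoef_self hm hdvd hA, fun h4 => ?_⟩
  · rw [Vparam_resCoef hm hdvd hA hB, negCoset_eq_id hα hk (hmod.mp h4), Finset.image_id]
  · rw [QuotientGroup.mk_mul, QuotientGroup.mk_mul,
      mk_neg_one_eq_mk_pow hα hk (Nat.not_even_iff_odd.mp (hmod.not.mp h4))]
  · rw [Vparam_resCoef hm hdvd hA hA, negCoset_eq_id hα hk (hmod.mp h4), Finset.image_id,
      ← Uparam_resCoef hm hdvd hA hA, Uparam_resCoef_self hm hdvd hA]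

end Paper
end
end
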